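/- If the canonical map φ_{∞,0}: X₀ → X_∞ is injective, then all maps φ_{∞,n}: X_n → X_∞ are injective (the scheme is fully injective). -/

import Mathlib

set_option linter.unusedSectionVars false
set_option linter.unusedVariables false

variable {Y : Type}

/-- Iterated embedding φ_{n,m} : X m → X n for m ≤ n. -/
def phiTo (X : ℕ → Type) (φs : ∀ n, X n → X (n + 1)) {m n : ℕ} (h : m ≤ n) (x : X m) : X n :=
  Nat.leRecOn h (fun {k} x => φs k x) x

/-- Iterated projection π_{m,q} : Yᵐ × X q → X (q+m), the head of the word acting outermost. -/
def piFin (X : ℕ → Type) (πo : ∀ n, Y → X n → X (n + 1)) :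
    ∀ (m q : ℕ), (Fin m → Y) → X q → X (q + m)
  | 0, _, _, x => x
  | m + 1, q, y, x => πo (q + m) (y 0) (piFin X πo m q (fun i => y i.succ) x)

/-- Iterated projection π_{m,0} : Yᵐ × X 0 → X m. -/
def piFin0 (X : ℕ → Type) (πo : ∀ n, Y → X n → X (n + 1)) :
    ∀ (m : ℕ), (Fin m → Y) → X 0 → X m
  | 0, _, x => x
  | m + 1, y, x => πo m (y 0) (piFin0 X πo m (fun i => y i.succ) x)

/-- The set Γ_n(x_n) ⊂ Y^ℕ : all infinite addresses y such that for every p ≥ n the point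
φ_{p,n}(x_n) lies in the cell C(y₁,…,y_p) = π_{p,0}({(y₁,…,y_p)} × X 0). -/
def Gamma (X : ℕ → Type) (φs : ∀ n, X n → X (n + 1)) (πo : ∀ n, Y → X n → X (n + 1))
    (n : ℕ) (xn : X n) : Set (ℕ → Y) :=
  { y | ∀ p, ∀ h : n ≤ p, ∃ x0 : X 0, phiTo X φs h xn = piFin0 X πo p (fun i : Fin p => y i.1) x0 }

/-- The relation R on Y^ℕ: related iff equal or both in some Γ_n(x_n). -/
def simRel (X : ℕ → Type) (φs : ∀ n, X n → X (n + 1)) (πo : ∀ n, Y → X n → X (n + 1)) :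
    (ℕ → Y) → (ℕ → Y) → Prop :=
  fun a b => a = b ∨ ∃ n, ∃ xn : X n, a ∈ Gamma X φs πo n xn ∧ b ∈ Gamma X φs πo n xn

variable {X : ℕ → Type}
  [TopologicalSpace Y] [CompactSpace Y] [T2Space Y]
  [∀ n, TopologicalSpace (X n)] [∀ n, CompactSpace (X n)] [∀ n, T2Space (X n)]

/-!
A point `x : X n` is recorded by the set `Γ_n(x)` of addresses of the cells containing its images.
The fibre condition on `π` lets cell membership descend one level at a time, so
`Γ_M(φ_{M,n} x) = Γ_n(x)`. A point `w = π_n(z₀, ξ)` of `X (n+1)` with address `z` unfolds to a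
point `ξ` of `X n` with the shifted address, the choice of `ξ` being made uniform in the depth by
compactness. By induction on `n`, starting from injectivity at level `0`, distinct points of `X n`
have disjoint `Γ`-sets. Hence membership in a `Γ`-set is constant on the classes of the equivalence
generated by `R`, and two points of `X n` identified in `X_∞` are equal.
-/

section

variable (φs : ∀ n, X n → X (n + 1)) (πo : ∀ n, Y → X n → X (n + 1))

section

omit [TopologicalSpace Y] [CompactSpace Y] [T2Space Y]
  [∀ n, TopologicalSpace (X n)] [∀ n, CompactSpace (X n)] [∀ n, T2Space (X n)]

theorem phiTo_self {n : ℕ} (h : n ≤ n) (x : X n) : phiTo X φs h x = x :=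
  Nat.leRecOn_self x

theorem phiTo_succ {m n : ℕ} (h : m ≤ n) (h' : m ≤ n + 1) (x : X m) :
    phiTo X φs h' x = φs n (phiTo X φs h x) :=
  Nat.leRecOn_succ h x

theorem phiTo_le_succ {n : ℕ} (h : n ≤ n + 1) (x : X n) : phiTo X φs h x = φs n x := by
  rw [phiTo_succ φs le_rfl, phiTo_self]

theorem phiTo_trans {a b c : ℕ} (hab : a ≤ b) (hbc : b ≤ c) (hac : a ≤ c) (x : X a) :
    phiTo X φs hac x = phiTo X φs hbc (phiTo X φs hab x) :=
  Nat.leRecOn_trans hab hbc x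

theorem phiTo_injective (hφi : ∀ n, Function.Injective (φs n)) {m n : ℕ} (h : m ≤ n) :
    Function.Injective (phiTo X φs h) :=
  Nat.leRecOn_injective h _ hφi

theorem phiTo_πo
    (hcomm : ∀ (n : ℕ) (y : Y) (x : X n), πo (n + 1) y (φs n x) = φs (n + 1) (πo n y x))
    {q p : ℕ} (h : q ≤ p) (h' : q + 1 ≤ p + 1) (y : Y) (ξ : X q) :
    phiTo X φs h' (πo q y ξ) = πo p y (phiTo X φs h ξ) := by
  induction h with
  | refl => rw [phiTo_self, phiTo_self]
  | @step k h ih =>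
    rw [phiTo_succ φs (Nat.succ_le_succ h), ih (Nat.succ_le_succ h), phiTo_succ φs h, hcomm]

def cell (p : ℕ) (z : ℕ → Y) : Set (X p) :=
  Set.range (piFin0 X πo p fun i : Fin p => z i)

theorem mem_cell_succ {p : ℕ} {z : ℕ → Y} {A : X (p + 1)} :
    A ∈ cell πo (p + 1) z ↔ ∃ c ∈ cell πo p (fun k => z (k + 1)), πo p (z 0) c = A := by
  simp only [cell, Set.exists_range_iff]
  rfl

theorem mem_Gamma_iff {n : ℕ} {x : X n} {z : ℕ → Y} :
    z ∈ Gamma X φs πo n x ↔ ∀ p (h : n ≤ p), phiTo X φs h x ∈ cell πo p z := by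
  simp only [Gamma, cell, Set.mem_ofPred_eq, Set.mem_range, eq_comm]

end

section

omit [CompactSpace Y] [T2Space Y] [∀ n, CompactSpace (X n)] [∀ n, T2Space (X n)]

theorem continuous_phiTo (hφc : ∀ n, Continuous (φs n)) {m n : ℕ} (h : m ≤ n) :
    Continuous (phiTo X φs h) := by
  induction h with
  | refl => exact continuous_id.congr fun x => (phiTo_self φs _ x).symm
  | @step k h ih => exact ((hφc k).comp ih).congr fun x => (phiTo_succ φs h _ x).symm

theorem continuous_piFin0 (hπc : ∀ n, Continuous fun p : Y × X n => πo n p.1 p.2) :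
    ∀ (p : ℕ) (w : Fin p → Y), Continuous (piFin0 X πo p w)
  | 0, _ => continuous_id
  | p + 1, _ => (hπc p).comp (continuous_const.prodMk (continuous_piFin0 hπc p _))

end

variable {φs πo} (hφc : ∀ n, Continuous (φs n)) (hφi : ∀ n, Function.Injective (φs n))
  (hπc : ∀ n, Continuous fun p : Y × X n => πo n p.1 p.2)
  (hπs : ∀ n, Function.Surjective fun p : Y × X n => πo n p.1 p.2)
  (hcomm : ∀ (n : ℕ) (y : Y) (x : X n), πo (n + 1) y (φs n x) = φs (n + 1) (πo n y x))
  (hquot : ∀ (n : ℕ) (y y' : Y) (ξ ξ' : X n), πo n y ξ = πo n y' ξ' → (y, ξ) ≠ (y', ξ') →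
    ∃ x0 x0' : X 0, ξ = phiTo X φs (Nat.zero_le n) x0 ∧ ξ' = phiTo X φs (Nat.zero_le n) x0' ∧
      πo 0 y x0 = πo 0 y' x0')

section

omit [TopologicalSpace Y] [CompactSpace Y] [T2Space Y]
  [∀ n, TopologicalSpace (X n)] [∀ n, CompactSpace (X n)] [∀ n, T2Space (X n)]

include hφi hcomm hquot in
theorem exists_πo_eq_of_πo_phiTo_eq {q p : ℕ} (h : q ≤ p) {y y' : Y} {ξ : X q} {c : X p}
    (hc : πo p y (phiTo X φs h ξ) = πo p y' c) :
    ∃ ξ', πo q y' ξ' = πo q y ξ ∧ phiTo X φs h ξ' = c := by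
  by_cases hpair : (y, phiTo X φs h ξ) = (y', c)
  · obtain ⟨rfl, hξc⟩ := Prod.mk.inj hpair
    exact ⟨ξ, rfl, hξc⟩
  obtain ⟨x0, x0', hξ, hc', hx0⟩ := hquot p y y' _ c hc hpair
  have hξ0 : ξ = phiTo X φs (Nat.zero_le q) x0 := by
    apply phiTo_injective φs hφi h
    rw [hξ, phiTo_trans φs (Nat.zero_le q) h]
  refine ⟨phiTo X φs (Nat.zero_le q) x0', ?_, ?_⟩
  · rw [hξ0, ← phiTo_πo φs πo hcomm (Nat.zero_le q) (Nat.succ_le_succ (Nat.zero_le q)),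
      ← phiTo_πo φs πo hcomm (Nat.zero_le q) (Nat.succ_le_succ (Nat.zero_le q)), hx0]
  · rw [hc', phiTo_trans φs (Nat.zero_le q) h]

include hφi hπs hcomm hquot

theorem mem_cell_of_φs_mem_cell {p : ℕ} {z : ℕ → Y} {A : X p}
    (hA : φs p A ∈ cell πo (p + 1) z) : A ∈ cell πo p z := by
  induction p generalizing z with
  | zero => exact ⟨A, rfl⟩
  | succ q ih =>
    obtain ⟨⟨e, E⟩, hEA⟩ := hπs q A
    obtain ⟨C, hC, hCA⟩ := (mem_cell_succ πo).mp hA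
    rw [← hEA, ← hcomm, ← phiTo_le_succ φs (Nat.le_succ q)] at hCA
    obtain ⟨E', hE', rfl⟩ := exists_πo_eq_of_πo_phiTo_eq hφi hcomm hquot _ hCA.symm
    rw [phiTo_le_succ] at hC
    exact (mem_cell_succ πo).mpr ⟨E', ih hC, hE'.trans hEA⟩

theorem mem_cell_of_phiTo_mem_cell {m n : ℕ} (h : m ≤ n) {z : ℕ → Y} {A : X m}
    (hA : phiTo X φs h A ∈ cell πo n z) : A ∈ cell πo m z := by
  induction h with
  | refl => rwa [phiTo_self] at hA
  | @step k h ih =>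
    rw [phiTo_succ φs h] at hA
    exact ih (mem_cell_of_φs_mem_cell hφi hπs hcomm hquot hA)

theorem Gamma_phiTo {n M : ℕ} (h : n ≤ M) (x : X n) :
    Gamma X φs πo M (phiTo X φs h x) = Gamma X φs πo n x := by
  ext z
  simp only [mem_Gamma_iff]
  refine ⟨fun hz p hp => ?_, fun hz p hp => ?_⟩
  · apply mem_cell_of_phiTo_mem_cell hφi hπs hcomm hquot (le_max_left p M)
    rw [← phiTo_trans φs hp _ (hp.trans (le_max_left p M)), phiTo_trans φs h (le_max_right p M)]
    exact hz _ (le_max_right p M)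
  · rw [← phiTo_trans φs h hp]
    exact hz p (h.trans hp)

end

section

omit [CompactSpace Y] [T2Space Y]

include hπc in
theorem isClosed_cell (p : ℕ) (z : ℕ → Y) : IsClosed (cell πo p z) :=
  (isCompact_range (continuous_piFin0 πo hπc p _)).isClosed

include hφc hφi hπc hπs hcomm hquot

/-- The commutative square `φ_{∞,q+1} ∘ π_q = π_∞ ∘ (id_Y × φ_{∞,q})`, read on addresses. -/
theorem exists_πo_eq_and_mem_Gamma {q : ℕ} {w : X (q + 1)} {z : ℕ → Y}
    (hz : z ∈ Gamma X φs πo (q + 1) w) :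
    ∃ ξ, πo q (z 0) ξ = w ∧ (fun k => z (k + 1)) ∈ Gamma X φs πo q ξ := by
  rw [mem_Gamma_iff] at hz
  let S : ℕ → Set (X q) := fun j => {ξ | πo q (z 0) ξ = w} ∩
    phiTo X φs (Nat.le_add_right q j) ⁻¹' cell πo (q + j) (fun k => z (k + 1))
  have hS_anti : ∀ j, S (j + 1) ⊆ S j := by
    rintro j ξ ⟨hξw, hξc⟩
    rw [Set.mem_preimage, phiTo_succ φs (Nat.le_add_right q j)] at hξc
    exact ⟨hξw, mem_cell_of_φs_mem_cell hφi hπs hcomm hquot hξc⟩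
  have hS_closed : ∀ j, IsClosed (S j) := fun j =>
    (isClosed_eq ((hπc q).comp (continuous_const.prodMk continuous_id)) continuous_const).inter
      ((isClosed_cell hπc _ _).preimage (continuous_phiTo φs hφc _))
  have hS_nonempty : ∀ j, (S j).Nonempty := by
    intro j
    obtain ⟨ξ₀, -, hξ₀⟩ := (mem_cell_succ πo).mp (phiTo_self φs le_rfl w ▸ hz (q + 1) le_rfl)
    obtain ⟨c, hc, hcw⟩ := (mem_cell_succ πo).mp (hz (q + j + 1) (by omega))
    rw [← hξ₀, phiTo_πo φs πo hcomm (Nat.le_add_right q j)] at hcw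
    obtain ⟨ξ, hξ, rfl⟩ := exists_πo_eq_of_πo_phiTo_eq hφi hcomm hquot _ hcw.symm
    exact ⟨ξ, hξ.trans hξ₀, hc⟩
  obtain ⟨ξ, hξ⟩ := IsCompact.nonempty_iInter_of_sequence_nonempty_isCompact_isClosed S
    hS_anti hS_nonempty (hS_closed 0).isCompact hS_closed
  rw [Set.mem_iInter] at hξ
  refine ⟨ξ, (hξ 0).1, mem_Gamma_iff φs πo |>.mpr fun p hp => ?_⟩
  obtain ⟨j, rfl⟩ := Nat.exists_eq_add_of_le hp
  exact (hξ j).2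

variable (h0 : ∀ (x x' : X 0) (z : ℕ → Y),
  z ∈ Gamma X φs πo 0 x → z ∈ Gamma X φs πo 0 x' → x = x')

include h0

theorem eq_of_mem_Gamma_of_mem_Gamma {n : ℕ} {x x' : X n} {z : ℕ → Y}
    (hx : z ∈ Gamma X φs πo n x) (hx' : z ∈ Gamma X φs πo n x') : x = x' := by
  induction n generalizing z with
  | zero => exact h0 x x' z hx hx'
  | succ q ih =>
    obtain ⟨ξ, rfl, hξ⟩ := exists_πo_eq_and_mem_Gamma hφc hφi hπc hπs hcomm hquot hx
    obtain ⟨ξ', rfl, hξ'⟩ := exists_πo_eq_and_mem_Gamma hφc hφi hπc hπs hcomm hquot hx'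
    rw [ih hξ hξ']

theorem Gamma_eq_of_mem_of_mem {k N : ℕ} {ξ : X k} {u : X N} {a : ℕ → Y}
    (hξ : a ∈ Gamma X φs πo k ξ) (hu : a ∈ Gamma X φs πo N u) :
    Gamma X φs πo k ξ = Gamma X φs πo N u := by
  rw [← Gamma_phiTo hφi hπs hcomm hquot (le_max_left k N)] at hξ ⊢
  rw [← Gamma_phiTo hφi hπs hcomm hquot (le_max_right k N)] at hu ⊢
  rw [eq_of_mem_Gamma_of_mem_Gamma hφc hφi hπc hπs hcomm hquot h0 hξ hu]

theorem mem_Gamma_iff_of_simRel {a b : ℕ → Y} (hab : simRel X φs πo a b) {N : ℕ} (u : X N) :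
    a ∈ Gamma X φs πo N u ↔ b ∈ Gamma X φs πo N u := by
  obtain rfl | ⟨k, ξ, ha, hb⟩ := hab
  · rfl
  exact ⟨fun h => Gamma_eq_of_mem_of_mem hφc hφi hπc hπs hcomm hquot h0 ha h ▸ hb,
    fun h => Gamma_eq_of_mem_of_mem hφc hφi hπc hπs hcomm hquot h0 hb h ▸ ha⟩

theorem mem_Gamma_iff_of_quot_eq {a b : ℕ → Y}
    (hab : Quot.mk (simRel X φs πo) a = Quot.mk (simRel X φs πo) b) {N : ℕ} (u : X N) :
    a ∈ Gamma X φs πo N u ↔ b ∈ Gamma X φs πo N u := by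
  let memGamma : (ℕ → Y) → ∀ N, X N → Prop := fun z N u => z ∈ Gamma X φs πo N u
  have hresp : ∀ a b, simRel X φs πo a b → memGamma a = memGamma b := fun a b hab => by
    funext N u
    exact propext (mem_Gamma_iff_of_simRel hφc hφi hπc hπs hcomm hquot h0 hab u)
  exact iff_of_eq (congrFun₂ (congrArg (Quot.lift memGamma hresp) hab) N u)

end

end

theorem statement_18
    (φs : ∀ n, X n → X (n + 1)) (πo : ∀ n, Y → X n → X (n + 1))
    (hφc : ∀ n, Continuous (φs n)) (hφi : ∀ n, Function.Injective (φs n))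
    (hπc : ∀ n, Continuous fun p : Y × X n => πo n p.1 p.2)
    (hπs : ∀ n, Function.Surjective fun p : Y × X n => πo n p.1 p.2)
    (hcomm : ∀ (n : ℕ) (y : Y) (x : X n), πo (n + 1) y (φs n x) = φs (n + 1) (πo n y x))
    (hquot : ∀ (n : ℕ) (y y' : Y) (ξ ξ' : X n), πo n y ξ = πo n y' ξ' → (y, ξ) ≠ (y', ξ') →
      ∃ x0 x0' : X 0, ξ = phiTo X φs (Nat.zero_le n) x0 ∧ ξ' = phiTo X φs (Nat.zero_le n) x0' ∧
        πo 0 y x0 = πo 0 y' x0')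
    (h0 : ∀ (x x' : X 0) (y y' : ℕ → Y),
      y ∈ Gamma X φs πo 0 x → y' ∈ Gamma X φs πo 0 x' →
      Quot.mk (simRel X φs πo) y = Quot.mk (simRel X φs πo) y' → x = x') :
    ∀ (n : ℕ) (xn xn' : X n) (y y' : ℕ → Y),
      y ∈ Gamma X φs πo n xn → y' ∈ Gamma X φs πo n xn' →
      Quot.mk (simRel X φs πo) y = Quot.mk (simRel X φs πo) y' → xn = xn' := by
  intro n xn xn' y y' hy hy' hyy'
  have h0' : ∀ (x x' : X 0) (z : ℕ → Y),
      z ∈ Gamma X φs πo 0 x → z ∈ Gamma X φs πo 0 x' → x = x' :=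
    fun x x' z hx hx' => h0 x x' z z hx hx' rfl
  have hy'_mem : y' ∈ Gamma X φs πo n xn :=
    (mem_Gamma_iff_of_quot_eq hφc hφi hπc hπs hcomm hquot h0' hyy' xn).mp hy
  exact eq_of_mem_Gamma_of_mem_Gamma hφc hφi hπc hπs hcomm hquot h0' hy'_mem hy'
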